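/- arXiv:2011.06585 — 4 statements merged into one kernel-verified Lean document; each statement's English description precedes it below -/
import Mathlib

section
/- Let M be a d×d real positive semidefinite matrix with trace 1, and let z ∈ ℝ^d be a unit vector with zᵀ M z ≥ 1 − ε for some ε ∈ [0,1]. Then the top unit eigenvector v₁ of M satisfies ⟨v₁, z⟩² ≥ 1 − 2ε. -/
open Matrix

/-!
Let `α = ⟨v, z⟩`. Since `v` is a unit eigenvector of the positive semidefinite `M`, the deflated
matrix `M - λ₁ v vᵀ` is still positive semidefinite, of trace `1 - λ₁`; bounding its quadratic
form by its trace gives `zᵀ M z ≤ λ₁ α² + (1 - λ₁)`. The Rayleigh bound `zᵀ M z ≤ λ₁` gives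
`λ₁ ≥ 1 - ε`, hence `α² ≥ 1 - ε / λ₁ ≥ 1 - 2ε` as soon as `ε ≤ 1/2`; for `ε > 1/2` there is
nothing to prove.
-/

namespace Matrix

variable {n : Type*} [Fintype n] {A : Matrix n n ℝ}

theorem IsHermitian.dotProduct_mulVec_le [DecidableEq n] (hA : A.IsHermitian) {m : ℝ}
    (hm : ∀ i, hA.eigenvalues i ≤ m) (x : n → ℝ) : x ⬝ᵥ A *ᵥ x ≤ m * (x ⬝ᵥ x) := by
  set μ := hA.eigenvalues
  set U : Matrix n n ℝ := (hA.eigenvectorUnitary : Matrix n n ℝ)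
  set y := Uᵀ *ᵥ x
  have hstar : star U = Uᵀ := by rw [star_eq_conjTranspose, conjTranspose_eq_transpose_of_trivial]
  have hA' : A = U * diagonal μ * Uᵀ := by
    conv_lhs => rw [hA.spectral_theorem]
    simp [U, hstar, μ]
  have hquad : x ⬝ᵥ A *ᵥ x = ∑ i, μ i * (y i * y i) := by
    rw [hA', ← mulVec_mulVec, ← mulVec_mulVec, dotProduct_mulVec, ← mulVec_transpose]
    simp [dotProduct, mulVec_diagonal, y, mul_left_comm]
  have hnorm : x ⬝ᵥ x = y ⬝ᵥ y := by
    have hUU : U * Uᵀ = 1 := by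
      rw [← hstar]; exact Unitary.coe_mul_star_self hA.eigenvectorUnitary
    calc x ⬝ᵥ x = x ⬝ᵥ (U * Uᵀ) *ᵥ x := by rw [hUU, one_mulVec]
      _ = y ⬝ᵥ y := by rw [← mulVec_mulVec, dotProduct_mulVec, ← mulVec_transpose]
  rw [hquad, hnorm, dotProduct, Finset.mul_sum]
  exact Finset.sum_le_sum fun i _ => mul_le_mul_of_nonneg_right (hm i) (mul_self_nonneg _)

theorem IsHermitian.dotProduct_mulVec_le_of_forall_eigenvalue_le (hA : A.IsHermitian) {lam : ℝ}
    (hmax : ∀ (μ : ℝ) (w : n → ℝ), w ≠ 0 → A *ᵥ w = μ • w → μ ≤ lam) (x : n → ℝ) :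
    x ⬝ᵥ A *ᵥ x ≤ lam * (x ⬝ᵥ x) := by
  classical
  exact hA.dotProduct_mulVec_le (fun i => hmax _ _
    ((WithLp.ofLp_eq_zero 2).ne.2 (hA.eigenvectorBasis.orthonormal.ne_zero i))
    (hA.mulVec_eigenvectorBasis i)) x

theorem PosSemidef.eigenvalues_le_trace [DecidableEq n] (hA : A.PosSemidef) (i : n) :
    hA.1.eigenvalues i ≤ A.trace := by
  rw [hA.1.trace_eq_sum_eigenvalues]
  exact Finset.single_le_sum (fun j _ => hA.eigenvalues_nonneg j) (Finset.mem_univ i)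

theorem PosSemidef.dotProduct_mulVec_le_trace_mul (hA : A.PosSemidef) (x : n → ℝ) :
    x ⬝ᵥ A *ᵥ x ≤ A.trace * (x ⬝ᵥ x) := by
  classical
  exact hA.1.dotProduct_mulVec_le hA.eigenvalues_le_trace x

variable {v : n → ℝ} {lam : ℝ}

theorem PosSemidef.sub_smul_vecMulVec_self (hA : A.PosSemidef) (hv : v ⬝ᵥ v = 1)
    (hAv : A *ᵥ v = lam • v) : (A - lam • vecMulVec v v).PosSemidef := by
  have hvv : (vecMulVec v v).IsHermitian := by
    simpa using (posSemidef_vecMulVec_self_star v).1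
  refine .of_dotProduct_mulVec_nonneg (hA.1.sub (hvv.smul (IsSelfAdjoint.all lam))) fun x => ?_
  have hvA : ∀ w, v ⬝ᵥ A *ᵥ w = lam * (v ⬝ᵥ w) := by
    intro w
    rw [dotProduct_mulVec, ← mulVec_transpose, ← conjTranspose_eq_transpose_of_trivial, hA.1, hAv,
      smul_dotProduct, smul_eq_mul]
  -- the quadratic form of the deflated matrix at `x` is that of `A` at `x - ⟨v, x⟩ v`
  have hproj := hA.dotProduct_mulVec_nonneg (x - (v ⬝ᵥ x) • v)
  simp only [star_trivial, mulVec_sub, mulVec_smul, dotProduct_sub, sub_dotProduct,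
    smul_dotProduct, dotProduct_smul, hAv, hvA, hv, smul_eq_mul] at hproj
  simp only [star_trivial, sub_mulVec, smul_mulVec, vecMulVec_mulVec, dotProduct_sub,
    dotProduct_smul, op_smul_eq_mul, smul_eq_mul, dotProduct_comm x v] at hproj ⊢
  linear_combination hproj

theorem PosSemidef.dotProduct_mulVec_le_of_mulVec_eq_smul (hA : A.PosSemidef) (hv : v ⬝ᵥ v = 1)
    (hAv : A *ᵥ v = lam • v) (x : n → ℝ) :
    x ⬝ᵥ A *ᵥ x ≤ lam * (v ⬝ᵥ x) ^ 2 + (A.trace - lam) * (x ⬝ᵥ x) := by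
  have h := (hA.sub_smul_vecMulVec_self hv hAv).dotProduct_mulVec_le_trace_mul x
  simp only [trace_sub, trace_smul, trace_vecMulVec, hv, sub_mulVec, smul_mulVec, vecMulVec_mulVec,
    dotProduct_sub, dotProduct_smul, op_smul_eq_mul, smul_eq_mul, dotProduct_comm x v] at h
  linear_combination h

end Matrix

theorem top_eigenvector_correlation_general {d : ℕ}
    (M : Matrix (Fin d) (Fin d) ℝ) (hM : M.PosSemidef) (htr : M.trace = 1)
    (z : Fin d → ℝ) (hz : ∑ i, z i ^ 2 = 1)
    (ε : ℝ) (hε0 : 0 ≤ ε)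
    (hzM : 1 - ε ≤ z ⬝ᵥ M.mulVec z)
    (lam : ℝ) (v : Fin d → ℝ) (hv : ∑ i, v i ^ 2 = 1)
    (heig : M.mulVec v = lam • v)
    (hmax : ∀ (μ : ℝ) (w : Fin d → ℝ), w ≠ 0 → M.mulVec w = μ • w → μ ≤ lam) :
    1 - 2 * ε ≤ (∑ i, v i * z i) ^ 2 := by
  change 1 - 2 * ε ≤ (v ⬝ᵥ z) ^ 2
  rcases lt_or_ge (1 / 2) ε with hε | hε
  · nlinarith [sq_nonneg (v ⬝ᵥ z)]
  have hz' : z ⬝ᵥ z = 1 := by simpa [dotProduct, sq] using hz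
  have hv' : v ⬝ᵥ v = 1 := by simpa [dotProduct, sq] using hv
  have hlam : 1 - ε ≤ lam := by
    simpa [hz'] using hzM.trans (hM.1.dotProduct_mulVec_le_of_forall_eigenvalue_le hmax z)
  have hbound := hM.dotProduct_mulVec_le_of_mulVec_eq_smul hv' heig z
  rw [htr, hz'] at hbound
  nlinarith [mul_nonneg hε0 (by linarith : (0 : ℝ) ≤ 2 * lam - 1)]

/-- If `M` is PSD with trace 1, `z` is a unit vector with `zᵀ M z ≥ 1 − ε`, then the top
unit eigenvector `v` of `M` satisfies `⟨v, z⟩² ≥ 1 − 2ε`. -/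
theorem top_eigenvector_correlation {d : ℕ}
    (M : Matrix (Fin d) (Fin d) ℝ) (hM : M.PosSemidef) (htr : M.trace = 1)
    (z : Fin d → ℝ) (hz : ∑ i, z i ^ 2 = 1)
    (ε : ℝ) (hε0 : 0 ≤ ε) (hε1 : ε ≤ 1)
    (hzM : 1 - ε ≤ z ⬝ᵥ M.mulVec z)
    (lam : ℝ) (v : Fin d → ℝ) (hv : ∑ i, v i ^ 2 = 1)
    (heig : M.mulVec v = lam • v)
    (hmax : ∀ (μ : ℝ) (w : Fin d → ℝ), w ≠ 0 → M.mulVec w = μ • w → μ ≤ lam) :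
    1 - 2 * ε ≤ (∑ i, v i * z i) ^ 2 :=
  top_eigenvector_correlation_general M hM htr z hz ε hε0 hzM lam v hv heig hmax
end

section
/- Let δ ∈ (0,1), and let d, k be positive integers with k ≤ d. There exists a set of k-sparse vectors in {0, ±1/√k}^d, each with exactly k nonzero coordinates, of cardinality at least (d/k)^{k(1−δ)} · (δ/e)^{δk}, such that any two distinct vectors in the set have Euclidean distance greater than √δ. -/
/-!
Scale sign patterns `σ : Fin d → SignType` with exactly `k` nonzero entries by `1/√k`: patterns at
Hamming distance `l` become vectors at Euclidean distance at least `√(l/k)`. There are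
`C(d,k) 2^k ≥ (d/k)^k 2^k` such patterns, and a Hamming ball of radius `t = ⌊δk⌋` around any
pattern holds at most `∑_{j ≤ t} C(2d, j) ≤ (2ed/(δk))^{δk}` of them. Choosing patterns greedily,
each time discarding the ball around the chosen one, therefore yields at least
`(d/k)^k 2^k (δk/(2ed))^{δk} ≥ (d/k)^{k(1-δ)} (δ/e)^{δk}` patterns with pairwise Hamming distance
greater than `δk`.
-/

open Finset Real

theorem Nat.div_pow_le_choose {α : Type*} [Field α] [LinearOrder α] [IsStrictOrderedRing α]
    {n k : ℕ} (h : k ≤ n) : ((n : α) / k) ^ k ≤ n.choose k := by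
  induction k generalizing n with
  | zero => simp
  | succ k ih =>
    obtain ⟨m, rfl⟩ : ∃ m, n = m + 1 := ⟨n - 1, by omega⟩
    have hkm : k ≤ m := by omega
    have hchoose : ((m + 1).choose (k + 1) : α) = (m + 1) / (k + 1) * m.choose k := by
      rw [div_mul_eq_mul_div, eq_div_iff (by positivity)]
      exact_mod_cast (Nat.add_one_mul_choose_eq m k).symm
    have hratio : ((m + 1 : α) / (k + 1)) ^ k ≤ ((m : α) / k) ^ k := by
      rcases k.eq_zero_or_pos with rfl | hk
      · simp
      refine pow_le_pow_left₀ (by positivity) ?_ k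
      rw [div_le_div_iff₀ (by positivity) (by positivity)]
      have : (k : α) ≤ m := by exact_mod_cast hkm
      nlinarith
    push_cast
    rw [hchoose, _root_.pow_succ']
    gcongr
    exact hratio.trans (ih hkm)

theorem sum_range_choose_le_rpow {n t : ℕ} {s : ℝ} (hts : t ≤ s) (hs : 0 < s) (hsn : s ≤ n) :
    ∑ j ∈ range (t + 1), (n.choose j : ℝ) ≤ (exp 1 * n / s) ^ s := by
  set x := s / n
  have hn : (0 : ℝ) < n := hs.trans_le hsn
  have hx0 : 0 < x := by positivity
  have hx1 : x ≤ 1 := div_le_one_of_le₀ hsn hn.le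
  have htn : t ≤ n := by exact_mod_cast hts.trans hsn
  have hgen : x ^ t * ∑ j ∈ range (t + 1), (n.choose j : ℝ) ≤ exp s := calc
    x ^ t * ∑ j ∈ range (t + 1), (n.choose j : ℝ) ≤ ∑ j ∈ range (t + 1), x ^ j * n.choose j := by
      rw [mul_sum]
      exact sum_le_sum fun j hj => mul_le_mul_of_nonneg_right
        (pow_le_pow_of_le_one hx0.le hx1 (mem_range_succ_iff.1 hj)) (by positivity)
    _ ≤ ∑ j ∈ range (n + 1), x ^ j * n.choose j :=
      sum_le_sum_of_subset_of_nonneg (range_subset_range.2 (by omega)) fun _ _ _ => by positivity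
    _ = (x + 1) ^ n := by simp [add_pow]
    _ ≤ exp x ^ n := by gcongr; exact add_one_le_exp x
    _ = exp s := by rw [← exp_nat_mul, mul_div_cancel₀ s hn.ne']
  calc ∑ j ∈ range (t + 1), (n.choose j : ℝ) ≤ exp s / x ^ t := by
        rw [le_div_iff₀ (by positivity)]; linarith
    _ ≤ exp s / x ^ s := by
        rw [← rpow_natCast]
        exact div_le_div_of_nonneg_left (exp_pos s).le (by positivity)
          (rpow_le_rpow_of_exponent_ge hx0 hx1 hts)
    _ = (exp 1 * n / s) ^ s := by
        rw [div_eq_mul_inv, ← inv_rpow hx0.le, inv_div, ← exp_one_rpow,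
          ← mul_rpow (by positivity) (by positivity), mul_div_assoc]

theorem packing_bound_mul_sum_choose_le {d k : ℕ} (hk : 0 < k) (hkd : k ≤ d) {δ : ℝ}
    (hδ0 : 0 < δ) (hδ1 : δ < 1) :
    (d / k : ℝ) ^ (k * (1 - δ)) * (δ / exp 1) ^ (δ * k) *
        ∑ j ∈ range (⌊δ * k⌋₊ + 1), ((2 * d).choose j : ℝ) ≤ d.choose k * 2 ^ k := by
  have hkR : (0 : ℝ) < k := by exact_mod_cast hk
  have hkdR : (k : ℝ) ≤ d := by exact_mod_cast hkd
  have hδk : δ * k ≤ k := by nlinarith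
  have hdk : (0 : ℝ) < d / k := div_pos (hkR.trans_le hkdR) hkR
  have hball := sum_range_choose_le_rpow (n := 2 * d) (s := δ * k) (Nat.floor_le (by positivity))
    (by positivity) (by push_cast; linarith)
  calc (d / k : ℝ) ^ (k * (1 - δ)) * (δ / exp 1) ^ (δ * k) *
        ∑ j ∈ range (⌊δ * k⌋₊ + 1), ((2 * d).choose j : ℝ)
      ≤ (d / k : ℝ) ^ (k * (1 - δ)) * (δ / exp 1) ^ (δ * k) *
          (exp 1 * (2 * d : ℕ) / (δ * k)) ^ (δ * k) := by gcongr
    _ = 2 ^ (δ * k) * (d / k : ℝ) ^ (k : ℝ) := by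
        rw [mul_assoc, ← mul_rpow (by positivity) (by positivity),
          show δ / exp 1 * (exp 1 * (2 * d : ℕ) / (δ * k)) = 2 * (d / k) by
            push_cast; field_simp,
          mul_rpow (by norm_num) (by positivity), mul_left_comm, ← rpow_add hdk]
        ring_nf
    _ ≤ 2 ^ k * d.choose k := by
        rw [rpow_natCast, ← rpow_natCast 2]
        gcongr
        · norm_num
        · exact Nat.div_pow_le_choose hkd
    _ = d.choose k * 2 ^ k := mul_comm _ _

section Hamming

variable {ι α : Type*} [Fintype ι] [DecidableEq α]

theorem exists_pairwise_lt_hammingDist_card_le (S : Finset (ι → α)) (t N : ℕ)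
    (hball : ∀ ρ ∈ S, #{σ ∈ S | hammingDist σ ρ ≤ t} ≤ N) :
    ∃ M ⊆ S, (M : Set (ι → α)).Pairwise (fun σ τ => t < hammingDist σ τ) ∧ #S ≤ #M * N := by
  induction S using Finset.strongInduction with
  | H S ih =>
  obtain rfl | ⟨ρ, hρ⟩ := S.eq_empty_or_nonempty
  · exact ⟨∅, empty_subset _, by simp, by simp⟩
  set R := {σ ∈ S | ¬hammingDist σ ρ ≤ t}
  have hρR : ρ ∉ R := by simp [R]
  have hRS : R ⊂ S := ssubset_of_subset_of_ne (filter_subset _ _) fun h => hρR (h ▸ hρ)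
  obtain ⟨M, hMR, hM, hRM⟩ := ih R hRS fun σ hσ =>
    (card_le_card (filter_subset_filter _ hRS.subset)).trans (hball σ (hRS.subset hσ))
  have hfar : ∀ σ ∈ M, t < hammingDist σ ρ := fun σ hσ => not_le.1 (mem_filter.1 (hMR hσ)).2
  refine ⟨insert ρ M, insert_subset hρ (hMR.trans hRS.subset), ?_, ?_⟩
  · rw [coe_insert, Set.pairwise_insert]
    exact ⟨hM, fun σ hσ _ => ⟨hammingDist_comm σ ρ ▸ hfar σ hσ, hfar σ hσ⟩⟩
  · rw [← card_filter_add_card_filter_not (fun σ => hammingDist σ ρ ≤ t),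
      card_insert_of_notMem fun h => hρR (hMR h), add_one_mul]
    exact add_comm (#M * N) N ▸ add_le_add (hball ρ hρ) hRM

variable [DecidableEq ι] [Fintype α]

theorem card_filter_card_ne_zero_eq [Zero α] (k : ℕ) :
    #{σ : ι → α | #{i | σ i ≠ 0} = k} =
      (Fintype.card ι).choose k * (Fintype.card α - 1) ^ k := by
  rw [card_eq_sum_card_fiberwise (f := fun σ => ({i | σ i ≠ 0} : Finset ι))
    (t := powersetCard k univ) (fun σ hσ => by simpa using hσ), ← card_univ,
    ← card_powersetCard, card_eq_sum_ones, sum_mul, one_mul]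
  refine sum_congr rfl fun s hs => ?_
  rw [mem_powersetCard_univ] at hs
  have hfiber : {σ ∈ ({σ : ι → α | #{i | σ i ≠ 0} = k} : Finset _) |
      ({i | σ i ≠ 0} : Finset ι) = s} =
      Fintype.piFinset fun i => if i ∈ s then univ.erase 0 else {0} := by
    ext σ
    have hsupp : ({i | σ i ≠ 0} : Finset ι) = s ↔
        ∀ i, σ i ∈ if i ∈ s then univ.erase 0 else {0} := by
      simp only [Finset.ext_iff, mem_filter, mem_univ, true_and]
      exact forall_congr' fun i => by split_ifs with hi <;> simp [hi]
    rw [mem_filter, mem_filter, Fintype.mem_piFinset, ← hsupp]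
    exact ⟨And.right, fun h => ⟨⟨mem_univ _, h ▸ hs⟩, h⟩⟩
  rw [hfiber, Fintype.card_piFinset]
  simp [apply_ite card, prod_ite_mem, hs]

theorem card_filter_hammingDist_le_le (ρ : ι → α) (t : ℕ) :
    #{σ | hammingDist σ ρ ≤ t} ≤
      ∑ j ∈ range (t + 1), (Fintype.card ι * (Fintype.card α - 1)).choose j := by
  -- `σ` is determined by the set of pairs `(i, σ i)` at which it differs from `ρ`.
  set U : Finset (ι × α) := {p | p.2 ≠ ρ p.1}
  have hU : #U = Fintype.card ι * (Fintype.card α - 1) := by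
    rw [card_filter, Fintype.sum_prod_type]
    simp only [← card_filter, filter_ne', card_erase_of_mem (mem_univ _), card_univ, sum_const,
      smul_eq_mul]
  let e : (ι → α) → Finset (ι × α) := fun σ => {p | p.2 ≠ ρ p.1 ∧ σ p.1 = p.2}
  have he_card (σ : ι → α) : #(e σ) = hammingDist σ ρ :=
    card_nbij' Prod.fst (fun i => (i, σ i)) (fun _ _ => by grind) (fun _ _ => by grind)
      (fun _ _ => by grind) (fun _ _ => rfl)
  have he_inj : Function.Injective e := by
    intro σ τ h
    ext i
    have hi (a : α) (ha : a ≠ ρ i) : σ i = a ↔ τ i = a := by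
      simpa [e, ha] using congrArg (((i, a) : ι × α) ∈ ·) h
    by_cases hσ : σ i = ρ i
    · by_contra hne
      exact hne ((hi (τ i) (fun h => hne (hσ.trans h.symm))).2 rfl)
    · exact ((hi (σ i) hσ).1 rfl).symm
  calc #{σ | hammingDist σ ρ ≤ t} ≤ #((range (t + 1)).biUnion fun j => powersetCard j U) := by
        refine card_le_card_of_injOn e (fun σ hσ => ?_) he_inj.injOn
        simp only [coe_filter, Set.mem_ofPred_eq, coe_biUnion, coe_range, Set.mem_Iio,
          mem_coe, mem_powersetCard, Set.mem_iUnion] at hσ ⊢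
        exact ⟨_, Nat.lt_succ_of_le hσ.2,
          fun _ hp => mem_filter.2 ⟨mem_univ _, (mem_filter.1 hp).2.1⟩, he_card σ⟩
    _ ≤ _ := card_biUnion_le.trans_eq (sum_congr rfl fun j _ => by rw [card_powersetCard, hU])

end Hamming

theorem SignType.cast_eq_zero_iff {a : SignType} : (a : ℝ) = 0 ↔ a = 0 := by
  cases a <;> simp

theorem SignType.one_le_sq_sub_cast {a b : SignType} (h : a ≠ b) : 1 ≤ ((a : ℝ) - b) ^ 2 := by
  cases a <;> cases b <;> simp_all <;> norm_num

def signVector {ι : Type*} (c : ℝ) (σ : ι → SignType) : EuclideanSpace ℝ ι :=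
  WithLp.toLp 2 fun i => c * σ i

theorem signVector_apply_eq_zero_or {ι : Type*} (c : ℝ) (σ : ι → SignType) (i : ι) :
    signVector c σ i = 0 ∨ signVector c σ i = c ∨ signVector c σ i = -c := by
  rcases (σ i).trichotomy with h | h | h <;> simp [signVector, h]

section SignVector

variable {ι : Type*} [Fintype ι]

theorem sq_mul_hammingDist_le_dist_signVector_sq (c : ℝ) (σ τ : ι → SignType) :
    c ^ 2 * hammingDist σ τ ≤ dist (signVector c σ) (signVector c τ) ^ 2 := by
  rw [EuclideanSpace.dist_eq, sq_sqrt (by positivity), hammingDist, card_filter, Nat.cast_sum,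
    mul_sum]
  refine sum_le_sum fun i _ => ?_
  split_ifs with h
  · simpa [signVector, Real.dist_eq, sq_abs, ← mul_sub, mul_pow] using
      mul_le_mul_of_nonneg_left (SignType.one_le_sq_sub_cast h) (sq_nonneg c)
  · simp only [Nat.cast_zero, mul_zero]; positivity

theorem signVector_injective {c : ℝ} (hc : c ≠ 0) :
    Function.Injective (signVector (ι := ι) c) := fun σ τ h => by
  have := sq_mul_hammingDist_le_dist_signVector_sq c σ τ
  rw [h, dist_self, zero_pow two_ne_zero] at this
  exact hammingDist_eq_zero.1 <|
    Nat.le_zero.1 (by exact_mod_cast nonpos_of_mul_nonpos_right this (by positivity))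

theorem sqrt_lt_dist_signVector {k : ℕ} {δ : ℝ} (hk : 0 < k) (hδ : 0 ≤ δ) {σ τ : ι → SignType}
    (h : δ * k < hammingDist σ τ) :
    √δ < dist (signVector (1 / √k) σ) (signVector (1 / √k) τ) := by
  have hkR : (0 : ℝ) < k := by exact_mod_cast hk
  rw [← sqrt_sq dist_nonneg]
  refine sqrt_lt_sqrt hδ (lt_of_lt_of_le ?_ (sq_mul_hammingDist_le_dist_signVector_sq _ σ τ))
  rwa [div_pow, one_pow, sq_sqrt hkR.le, one_div_mul_eq_div, lt_div_iff₀ hkR]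

theorem card_filter_signVector_ne_zero {c : ℝ} (hc : c ≠ 0) (σ : ι → SignType) :
    #{i | signVector c σ i ≠ 0} = #{i | σ i ≠ 0} := by
  simp [signVector, hc, SignType.cast_eq_zero_iff]

end SignVector

/-- Packing of `k`-sparse sign vectors: there is a set of vectors in `{0, ±1/√k}^d`, each with
exactly `k` nonzero coordinates, of cardinality at least `(d/k)^{k(1−δ)} (δ/e)^{δk}`, whose
pairwise Euclidean distances all exceed `√δ`. -/
theorem sparse_vector_packing (d k : ℕ) (hk : 0 < k) (hkd : k ≤ d)
    (δ : ℝ) (hδ0 : 0 < δ) (hδ1 : δ < 1) :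
    ∃ V : Finset (EuclideanSpace ℝ (Fin d)),
      (∀ v ∈ V,
        (∀ i, v i = 0 ∨ v i = 1 / Real.sqrt k ∨ v i = -(1 / Real.sqrt k)) ∧
        (Finset.univ.filter fun i => v i ≠ 0).card = k) ∧
      ((d : ℝ) / k) ^ ((k : ℝ) * (1 - δ)) * (δ / Real.exp 1) ^ (δ * k) ≤ V.card ∧
      (∀ v ∈ V, ∀ w ∈ V, v ≠ w → Real.sqrt δ < dist v w) := by
  set N := ∑ j ∈ range (⌊δ * k⌋₊ + 1), (2 * d).choose j
  have hN : 0 < N := sum_pos' (fun _ _ => Nat.zero_le _) ⟨0, by simp, by simp⟩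
  have hcard : Fintype.card SignType - 1 = 2 := rfl
  obtain ⟨M, hMS, hM, hSM⟩ := exists_pairwise_lt_hammingDist_card_le
    {σ : Fin d → SignType | #{i | σ i ≠ 0} = k} ⌊δ * k⌋₊ N fun ρ _ =>
      (card_le_card (filter_subset_filter _ (subset_univ _))).trans <| by
        simpa [N, hcard, mul_comm] using card_filter_hammingDist_le_le ρ ⌊δ * k⌋₊
  have hc : 1 / √k ≠ 0 := by positivity
  refine ⟨M.image (signVector (1 / √k)), ?_, ?_, ?_⟩
  · simp only [mem_image]
    rintro _ ⟨σ, hσ, rfl⟩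
    refine ⟨signVector_apply_eq_zero_or _ σ, ?_⟩
    rw [card_filter_signVector_ne_zero hc]
    exact (mem_filter.1 (hMS hσ)).2
  · rw [card_image_of_injective _ (signVector_injective hc)]
    refine le_of_mul_le_mul_right (?_ : _ ≤ (#M : ℝ) * N) (Nat.cast_pos.2 hN)
    calc _ ≤ (d.choose k * 2 ^ k : ℝ) := by
          simpa [N] using packing_bound_mul_sum_choose_le hk hkd hδ0 hδ1
      _ ≤ #M * N := by
          exact_mod_cast (by simpa [card_filter_card_ne_zero_eq, hcard] using hSM)
  · simp only [mem_image]
    rintro _ ⟨σ, hσ, rfl⟩ _ ⟨τ, hτ, rfl⟩ hne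
    refine sqrt_lt_dist_signVector hk hδ0.le ?_
    exact (Nat.lt_floor_add_one _).trans_le (by exact_mod_cast hM hσ hτ fun h => hne (h ▸ rfl))
end

section
/- Let w ∼ N(0, Id_d) be a standard Gaussian vector in ℝ^d and 1 ≤ k ≤ d. Let S_k ⊆ [d] be the set of indices of the k largest coordinates of w in absolute value. Then with probability at least 1 − (k/(ed))^k, ∑_{i ∈ S_k} w_i² ≤ 10·k·ln(ed/k). -/
open MeasureTheory ProbabilityTheory
open scoped ENNReal NNReal

section Aux

/-- The one-dimensional Gaussian integral of `exp (x^2/4)`. -/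
lemma gauss_exp_quarter :
    Integrable (fun x : ℝ => Real.exp (x ^ 2 / 4)) (gaussianReal 0 1) ∧
      ∫ x, Real.exp (x ^ 2 / 4) ∂(gaussianReal 0 1) = Real.sqrt 2 := by
  have hπ : 0 < Real.pi := Real.pi_pos
  have hγ : gaussianReal 0 1
      = MeasureTheory.volume.withDensity
          (fun x => ((Real.toNNReal (gaussianPDFReal 0 1 x) : ℝ≥0) : ℝ≥0∞)) :=
    gaussianReal_of_var_ne_zero 0 one_ne_zero
  have hmeas : Measurable fun x : ℝ => Real.toNNReal (gaussianPDFReal 0 1 x) :=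
    (measurable_gaussianPDFReal 0 1).real_toNNReal
  have key : ∀ x : ℝ, (Real.toNNReal (gaussianPDFReal 0 1 x) : ℝ) • Real.exp (x ^ 2 / 4)
      = (Real.sqrt (2 * Real.pi))⁻¹ * Real.exp (-(4⁻¹ : ℝ) * x ^ 2) := by
    intro x
    rw [smul_eq_mul, Real.coe_toNNReal _ (gaussianPDFReal_nonneg 0 1 x)]
    simp only [gaussianPDFReal, NNReal.coe_one, mul_one, sub_zero]
    rw [mul_assoc, ← Real.exp_add]
    ring_nf
  have hint' : Integrable
      (fun x : ℝ => (Real.sqrt (2 * Real.pi))⁻¹ * Real.exp (-(4⁻¹ : ℝ) * x ^ 2)) :=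
    (integrable_exp_neg_mul_sq (by norm_num : (0:ℝ) < 4⁻¹)).const_mul _
  have hint : Integrable (fun x : ℝ => Real.exp (x ^ 2 / 4)) (gaussianReal 0 1) := by
    rw [hγ, integrable_withDensity_iff_integrable_smul hmeas]
    exact hint'.congr (by filter_upwards with x using (key x).symm)
  refine ⟨hint, ?_⟩
  rw [hγ, integral_withDensity_eq_integral_smul hmeas]
  calc ∫ x, (Real.toNNReal (gaussianPDFReal 0 1 x) : ℝ) • Real.exp (x ^ 2 / 4)
      = ∫ x, (Real.sqrt (2 * Real.pi))⁻¹ * Real.exp (-(4⁻¹ : ℝ) * x ^ 2) := by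
        exact integral_congr_ae (by filter_upwards with x using key x)
    _ = (Real.sqrt (2 * Real.pi))⁻¹ * ∫ x, Real.exp (-(4⁻¹ : ℝ) * x ^ 2) :=
        integral_const_mul _ _
    _ = (Real.sqrt (2 * Real.pi))⁻¹ * Real.sqrt (Real.pi / 4⁻¹) := by
        rw [integral_gaussian]
    _ = Real.sqrt 2 := by
        have h1 : Real.sqrt (Real.pi / 4⁻¹) = Real.sqrt 2 * Real.sqrt (2 * Real.pi) := by
          rw [← Real.sqrt_mul (by norm_num : (0:ℝ) ≤ 2)]
          congr 1
          field_simp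
          ring
        have h2 : Real.sqrt (2 * Real.pi) ≠ 0 := by positivity
        rw [h1, mul_comm (Real.sqrt 2), ← mul_assoc, inv_mul_cancel₀ h2, one_mul]

/-- Fubini for products of functions of single coordinates, w.r.t. the Gaussian
product measure. -/
lemma pi_gaussian_integral {d : ℕ} (f : Fin d → ℝ → ℝ)
    (hf : ∀ i, Integrable (f i) (gaussianReal 0 1)) :
    Integrable (fun w : Fin d → ℝ => ∏ i, f i (w i))
        (Measure.pi fun _ => gaussianReal 0 1) ∧
      ∫ w, (∏ i, f i (w i)) ∂(Measure.pi fun _ : Fin d => gaussianReal 0 1)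
        = ∏ i, ∫ x, f i x ∂(gaussianReal 0 1) := by
  letI : MeasureSpace ℝ := ⟨gaussianReal 0 1⟩
  haveI : SigmaFinite (volume : Measure ℝ) :=
    inferInstanceAs (SigmaFinite (gaussianReal 0 1))
  exact ⟨Integrable.fintype_prod hf, integral_fintype_prod_eq_prod f⟩

/-- `k^k ≤ k! * e^k`. -/
lemma pow_self_le_factorial_mul_exp (k : ℕ) :
    (k : ℝ) ^ k ≤ (k.factorial : ℝ) * Real.exp k := by
  have h := Real.sum_le_exp_of_nonneg (x := (k : ℝ)) (Nat.cast_nonneg k) (k + 1)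
  have h2 : (k : ℝ) ^ k / (k.factorial : ℝ)
      ≤ ∑ i ∈ Finset.range (k + 1), (k : ℝ) ^ i / (i.factorial : ℝ) := by
    refine Finset.single_le_sum (f := fun i => (k : ℝ) ^ i / (i.factorial : ℝ))
      (fun i _ => by positivity) ?_
    exact Finset.mem_range.2 (Nat.lt_succ_self k)
  have hfac : (0:ℝ) < (k.factorial : ℝ) := by exact_mod_cast k.factorial_pos
  rw [div_le_iff₀ hfac] at h2
  calc (k : ℝ) ^ k ≤ Real.exp k * (k.factorial : ℝ) := h2.trans
        (mul_le_mul_of_nonneg_right h hfac.le)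
    _ = (k.factorial : ℝ) * Real.exp k := by ring

/-- The key arithmetic inequality. -/
lemma arith_ineq (d k : ℕ) (hk1 : 1 ≤ k) (hkd : k ≤ d) :
    (d.choose k : ℝ) *
        (Real.sqrt 2 ^ k *
          Real.exp (-(10 * k * Real.log (Real.exp 1 * d / k) / 4)))
      ≤ ((k : ℝ) / (Real.exp 1 * d)) ^ k := by
  have hk0 : (0:ℝ) < k := by exact_mod_cast hk1
  have hd0 : (0:ℝ) < d := lt_of_lt_of_le hk0 (by exact_mod_cast hkd)
  set L : ℝ := Real.log (Real.exp 1 * d / k) with hL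
  have hq : (0:ℝ) < Real.exp 1 * d / k := by positivity
  have hL1 : 1 ≤ L := by
    rw [hL, Real.le_log_iff_exp_le hq, le_div_iff₀ hk0]
    exact mul_le_mul_of_nonneg_left (by exact_mod_cast hkd) (Real.exp_pos 1).le
  have hEL : Real.exp L = Real.exp 1 * d / k := Real.exp_log hq
  have hexpkL : Real.exp (k * L) = (Real.exp 1 * d / k) ^ k := by
    rw [Real.exp_nat_mul, hEL]
  -- binomial bound
  have h1 : (d.choose k : ℝ) * (k.factorial : ℝ) ≤ (d : ℝ) ^ k := by
    have := (Nat.descFactorial_eq_factorial_mul_choose d k).symm.le.trans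
      (Nat.descFactorial_le_pow d k)
    calc (d.choose k : ℝ) * (k.factorial : ℝ) = ((k.factorial * d.choose k : ℕ) : ℝ) := by
          push_cast; ring
      _ ≤ ((d ^ k : ℕ) : ℝ) := by exact_mod_cast this
      _ = (d : ℝ) ^ k := by push_cast; ring
  have h2 := pow_self_le_factorial_mul_exp k
  have hfac : (0:ℝ) < (k.factorial : ℝ) := by exact_mod_cast k.factorial_pos
  have hchoose : (d.choose k : ℝ) ≤ Real.exp (k * L) := by
    rw [hexpkL]
    have h3 : (d.choose k : ℝ) * (k.factorial : ℝ) * ((k:ℝ) ^ k)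
        ≤ (d : ℝ) ^ k * ((k.factorial : ℝ) * Real.exp k) :=
      le_trans (mul_le_mul_of_nonneg_right h1 (by positivity))
        (mul_le_mul_of_nonneg_left h2 (by positivity))
    have h4 : (d.choose k : ℝ) * ((k:ℝ) ^ k) ≤ (d : ℝ) ^ k * Real.exp k := by
      have := le_of_mul_le_mul_right (by nlinarith [h3] : (d.choose k : ℝ) * ((k:ℝ) ^ k)
        * (k.factorial : ℝ) ≤ (d : ℝ) ^ k * Real.exp k * (k.factorial : ℝ)) hfac
      exact this
    have hpow : (Real.exp 1 * d / k) ^ k = (d : ℝ) ^ k * Real.exp k / (k:ℝ) ^ k := by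
      rw [div_pow, mul_pow, ← Real.exp_nat_mul, mul_one]
      ring
    rw [hpow, le_div_iff₀ (by positivity)]
    exact h4
  have hsqrt : Real.sqrt 2 ^ k ≤ Real.exp ((k : ℝ) * 2⁻¹) := by
    have h2e : (2:ℝ) ≤ Real.exp 1 := by
      have := Real.add_one_le_exp (1:ℝ); linarith
    have hs : Real.sqrt 2 ≤ Real.exp 2⁻¹ := by
      have hss : Real.exp 1 = Real.exp 2⁻¹ * Real.exp 2⁻¹ := by
        rw [← Real.exp_add]; norm_num
      have := Real.sqrt_le_sqrt h2e
      rwa [hss, Real.sqrt_mul_self (Real.exp_pos _).le] at this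
    calc Real.sqrt 2 ^ k ≤ Real.exp 2⁻¹ ^ k :=
          pow_le_pow_left₀ (Real.sqrt_nonneg 2) hs k
      _ = Real.exp ((k : ℝ) * 2⁻¹) := by rw [Real.exp_nat_mul]
  have hRHS : ((k : ℝ) / (Real.exp 1 * d)) ^ k = Real.exp (-((k:ℝ) * L)) := by
    have : (k : ℝ) / (Real.exp 1 * d) = Real.exp (-L) := by
      rw [Real.exp_neg, hEL, inv_div]
    rw [this, ← Real.exp_nat_mul]
    ring_nf
  rw [hRHS]
  calc (d.choose k : ℝ) * (Real.sqrt 2 ^ k * Real.exp (-(10 * k * L / 4)))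
      ≤ Real.exp ((k:ℝ) * L) * (Real.exp ((k:ℝ) * 2⁻¹) * Real.exp (-(10 * k * L / 4))) := by
        exact mul_le_mul hchoose
          (mul_le_mul_of_nonneg_right hsqrt (Real.exp_pos _).le)
          (by positivity) (Real.exp_pos _).le
    _ = Real.exp ((k:ℝ) * L + ((k:ℝ) * 2⁻¹ + -(10 * k * L / 4))) := by
        rw [← Real.exp_add, ← Real.exp_add]
    _ ≤ Real.exp (-((k:ℝ) * L)) := by
        rw [Real.exp_le_exp]
        nlinarith [mul_nonneg hk0.le (sub_nonneg.2 hL1)]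

end Aux

/-- For a standard Gaussian vector `w` in `ℝᵈ` and `1 ≤ k ≤ d`, with probability at least
`1 − (k/(e d))^k` the sum of the squares of the `k` largest coordinates of `w` (equivalently,
of any `k` coordinates) is at most `10 k ln(e d / k)`. -/
theorem sum_sq_largest_coordinates_gaussian (d k : ℕ) (hk1 : 1 ≤ k) (hkd : k ≤ d) :
    ENNReal.ofReal (1 - ((k : ℝ) / (Real.exp 1 * d)) ^ k) ≤
      (Measure.pi fun _ : Fin d => gaussianReal 0 1)
        {w : Fin d → ℝ | ∀ S : Finset (Fin d), S.card = k →
          (∑ i ∈ S, (w i) ^ 2) ≤ 10 * k * Real.log (Real.exp 1 * d / k)} := by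
  classical
  set μ := Measure.pi fun _ : Fin d => gaussianReal 0 1 with hμ
  set t : ℝ := 10 * k * Real.log (Real.exp 1 * d / k) with ht
  set E : Set (Fin d → ℝ) :=
    {w : Fin d → ℝ | ∀ S : Finset (Fin d), S.card = k → (∑ i ∈ S, (w i) ^ 2) ≤ t} with hE
  -- Markov bound for a fixed S of cardinality k
  have hmarkov : ∀ S : Finset (Fin d), S.card = k →
      μ {w : Fin d → ℝ | ¬ (∑ i ∈ S, (w i) ^ 2) ≤ t}
        ≤ ENNReal.ofReal (Real.sqrt 2 ^ k * Real.exp (-(t / 4))) := by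
    intro S hS
    set f : Fin d → ℝ → ℝ := fun i x => if i ∈ S then Real.exp (x ^ 2 / 4) else 1 with hf
    have hfi : ∀ i, Integrable (f i) (gaussianReal 0 1) := by
      intro i
      by_cases h : i ∈ S <;> simp only [hf, h, if_true, if_false]
      · exact gauss_exp_quarter.1
      · exact integrable_const 1
    obtain ⟨hFint, hFval⟩ := pi_gaussian_integral f hfi
    set F : (Fin d → ℝ) → ℝ := fun w => Real.exp ((∑ i ∈ S, (w i) ^ 2) / 4) with hFdef
    have hFeq : ∀ w : Fin d → ℝ, (∏ i, f i (w i)) = F w := by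
      intro w
      simp only [hf, hFdef]
      rw [Finset.prod_ite_mem Finset.univ S (fun i => Real.exp ((w i) ^ 2 / 4)),
        Finset.univ_inter, ← Real.exp_sum, Finset.sum_div]
    have hFint' : Integrable F μ := hFint.congr (Filter.Eventually.of_forall hFeq)
    have hFval' : ∫ w, F w ∂μ = Real.sqrt 2 ^ k := by
      rw [← integral_congr_ae (Filter.Eventually.of_forall hFeq), hFval]
      have : ∀ i : Fin d, ∫ x, f i x ∂(gaussianReal 0 1)
          = if i ∈ S then Real.sqrt 2 else 1 := by
        intro i
        by_cases h : i ∈ S <;> simp only [hf, h, if_true, if_false]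
        · exact gauss_exp_quarter.2
        · simp
      rw [Finset.prod_congr rfl fun i _ => this i,
        Finset.prod_ite_mem Finset.univ S (fun _ => Real.sqrt 2), Finset.univ_inter,
        Finset.prod_const, hS]
    have hFmeas : Measurable F := by
      have : Continuous F := by
        apply Real.continuous_exp.comp
        exact (continuous_finset_sum S fun i _ => (continuous_apply i).pow 2).div_const 4
      exact this.measurable
    have hg : AEMeasurable (fun w => ENNReal.ofReal (F w)) μ :=
      (ENNReal.measurable_ofReal.comp hFmeas).aemeasurable
    set ε : ℝ≥0∞ := ENNReal.ofReal (Real.exp (t / 4)) with hε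
    have hεpos : ε ≠ 0 := by
      simp [hε, ENNReal.ofReal_eq_zero, not_le, Real.exp_pos]
    have hεtop : ε ≠ ⊤ := ENNReal.ofReal_ne_top
    have hsub : {w : Fin d → ℝ | ¬ (∑ i ∈ S, (w i) ^ 2) ≤ t}
        ⊆ {w | ε ≤ ENNReal.ofReal (F w)} := by
      intro w hw
      simp only [Set.mem_setOf_eq, not_le] at hw
      refine ENNReal.ofReal_le_ofReal ?_
      exact Real.exp_le_exp.2 (by linarith)
    have hlintegral : ∫⁻ w, ENNReal.ofReal (F w) ∂μ
        = ENNReal.ofReal (Real.sqrt 2 ^ k) := by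
      rw [← ofReal_integral_eq_lintegral_ofReal hFint'
        (Filter.Eventually.of_forall fun w => (Real.exp_pos _).le), hFval']
    have hmark := mul_meas_ge_le_lintegral₀ hg ε
    rw [hlintegral] at hmark
    calc μ {w : Fin d → ℝ | ¬ (∑ i ∈ S, (w i) ^ 2) ≤ t}
        ≤ μ {w | ε ≤ ENNReal.ofReal (F w)} := measure_mono hsub
      _ ≤ ENNReal.ofReal (Real.sqrt 2 ^ k) / ε := by
          rw [ENNReal.le_div_iff_mul_le (Or.inl hεpos) (Or.inl hεtop), mul_comm]
          exact hmark
      _ = ENNReal.ofReal (Real.sqrt 2 ^ k * Real.exp (-(t / 4))) := by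
          rw [hε, ← ENNReal.ofReal_div_of_pos (Real.exp_pos _)]
          congr 1
          rw [Real.exp_neg, div_eq_mul_inv]
  -- Union bound
  set 𝒮 : Finset (Finset (Fin d)) := Finset.powersetCard k (Finset.univ : Finset (Fin d))
    with h𝒮
  have hEc : Eᶜ ⊆ ⋃ S ∈ 𝒮, {w : Fin d → ℝ | ¬ (∑ i ∈ S, (w i) ^ 2) ≤ t} := by
    intro w hw
    simp only [hE, Set.mem_compl_iff, Set.mem_setOf_eq, not_forall] at hw
    obtain ⟨S, hcard, hgt⟩ := hw
    have hSmem : S ∈ 𝒮 := Finset.mem_powersetCard.2 ⟨Finset.subset_univ S, hcard⟩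
    exact Set.mem_biUnion hSmem hgt
  have hunion : μ Eᶜ ≤ ENNReal.ofReal (((k : ℝ) / (Real.exp 1 * d)) ^ k) := by
    calc μ Eᶜ ≤ μ (⋃ S ∈ 𝒮, {w : Fin d → ℝ | ¬ (∑ i ∈ S, (w i) ^ 2) ≤ t}) :=
          measure_mono hEc
      _ ≤ ∑ S ∈ 𝒮, μ {w : Fin d → ℝ | ¬ (∑ i ∈ S, (w i) ^ 2) ≤ t} :=
          measure_biUnion_finset_le 𝒮 _
      _ ≤ 𝒮.card • ENNReal.ofReal (Real.sqrt 2 ^ k * Real.exp (-(t / 4))) := by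
          refine Finset.sum_le_card_nsmul 𝒮 _ _ fun S hSmem => ?_
          have : S.card = k := (Finset.mem_powersetCard.1 hSmem).2
          exact hmarkov S this
      _ = (d.choose k : ℝ≥0∞) * ENNReal.ofReal (Real.sqrt 2 ^ k * Real.exp (-(t / 4))) := by
          rw [h𝒮, Finset.card_powersetCard, Finset.card_univ, Fintype.card_fin,
            nsmul_eq_mul]
      _ ≤ ENNReal.ofReal (((k : ℝ) / (Real.exp 1 * d)) ^ k) := by
          rw [← ENNReal.ofReal_natCast, ← ENNReal.ofReal_mul (Nat.cast_nonneg _)]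
          exact ENNReal.ofReal_le_ofReal (arith_ineq d k hk1 hkd)
  -- Conclusion
  have hprob : IsProbabilityMeasure μ := by
    rw [hμ]; infer_instance
  have h1 : (1 : ℝ≥0∞) ≤ μ E + μ Eᶜ := by
    have := measure_union_le (μ := μ) E Eᶜ
    rwa [Set.union_compl_self, measure_univ] at this
  have hx0 : (0:ℝ) ≤ ((k : ℝ) / (Real.exp 1 * d)) ^ k := by positivity
  calc ENNReal.ofReal (1 - ((k : ℝ) / (Real.exp 1 * d)) ^ k)
      = 1 - ENNReal.ofReal (((k : ℝ) / (Real.exp 1 * d)) ^ k) := by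
        rw [ENNReal.ofReal_sub _ hx0, ENNReal.ofReal_one]
    _ ≤ 1 - μ Eᶜ := tsub_le_tsub_left hunion 1
    _ ≤ μ E := tsub_le_iff_right.2 h1
end

section
/- Let η be the probability distribution on ℝ defined as the mixture η = (1−δ)η₀ + δη₁, where η₁ takes values ±λ with probability 1/2 each and η₀ is symmetric with r-th moment ((r−1)!! − δλ^r)/(1−δ) for even 0 ≤ r ≤ s and 0 for odd r. Then for every integer r with 0 ≤ r ≤ s+1, E_{x∼η} x^r = E_{x∼N(0,1)} x^r, and for every even r > s, E_{x∼η} x^r ≥ δλ^r. -/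
open MeasureTheory ProbabilityTheory Real
open scoped ENNReal NNReal Nat

/-!
Both `η` and the standard Gaussian are symmetric, so their odd moments vanish; in particular
this covers the degree `s + 1`, which is odd. For even `r` the `r`-th moment of `η` is
`(1 - δ) E_{η₀}[x ^ r] + δ λ ^ r`. Up to degree `s` the prescribed moments of `η₀` make this
`(r - 1)‼`, the Gaussian moment, which follows from `E[x ^ (n + 2)] = (n + 1) E[x ^ n]`
(integration by parts against the density `φ`, using `φ' = -x φ`). Beyond degree `s` the even
moment of `η₀` is nonnegative, which leaves the lower bound `δ λ ^ r`.
-/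

section Symmetric

variable {G E : Type*} [MeasurableSpace G] [InvolutiveNeg G] [MeasurableNeg G]
  [NormedAddCommGroup E] [NormedSpace ℝ E]

theorem integral_eq_zero_of_map_neg_eq_self {μ : Measure G} (hμ : μ.map Neg.neg = μ)
    {f : G → E} (hf : ∀ x, f (-x) = -f x) : ∫ x, f x ∂μ = 0 := by
  have h := integral_map_equiv (μ := μ) (MeasurableEquiv.neg G) f
  change ∫ y, f y ∂μ.map Neg.neg = ∫ x, f (-x) ∂μ at h
  simp only [hμ, hf, integral_neg] at h
  have h2 : (2 : ℝ) • ∫ x, f x ∂μ = 0 := by rw [two_smul]; nth_rw 2 [h]; exact add_neg_cancel _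
  exact (smul_eq_zero.mp h2).resolve_left two_ne_zero

theorem map_neg_smul_add_smul_eq_self {μ ν : Measure G} (hμ : μ.map Neg.neg = μ)
    (hν : ν.map Neg.neg = ν) (a b : ℝ≥0∞) : (a • μ + b • ν).map Neg.neg = a • μ + b • ν := by
  rw [Measure.map_add _ _ measurable_neg, Measure.map_smul, Measure.map_smul, hμ, hν]

end Symmetric

section TwoPoint

variable {α E : Type*} [MeasurableSpace α] [MeasurableSingletonClass α] [NormedAddCommGroup E]

theorem integrable_half_dirac_add_half_dirac (f : α → E) (a b : α) :
    Integrable f ((2 : ℝ≥0∞)⁻¹ • Measure.dirac a + (2 : ℝ≥0∞)⁻¹ • Measure.dirac b) :=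
  ((integrable_dirac enorm_lt_top).smul_measure (by simp)).add_measure
    ((integrable_dirac enorm_lt_top).smul_measure (by simp))

theorem integral_half_dirac_add_half_dirac [NormedSpace ℝ E] [CompleteSpace E]
    (f : α → E) (a b : α) :
    ∫ x, f x ∂((2 : ℝ≥0∞)⁻¹ • Measure.dirac a + (2 : ℝ≥0∞)⁻¹ • Measure.dirac b)
      = (2 : ℝ)⁻¹ • (f a + f b) := by
  rw [integral_add_measure ((integrable_dirac enorm_lt_top).smul_measure (by simp))
      ((integrable_dirac enorm_lt_top).smul_measure (by simp)),
    integral_smul_measure, integral_smul_measure, integral_dirac, integral_dirac, smul_add]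
  norm_num

end TwoPoint

theorem map_neg_half_dirac_add_half_dirac_neg (a : ℝ) :
    ((2 : ℝ≥0∞)⁻¹ • Measure.dirac a + (2 : ℝ≥0∞)⁻¹ • Measure.dirac (-a)).map Neg.neg
      = (2 : ℝ≥0∞)⁻¹ • Measure.dirac a + (2 : ℝ≥0∞)⁻¹ • Measure.dirac (-a) := by
  rw [Measure.map_add _ _ measurable_neg, Measure.map_smul, Measure.map_smul,
    Measure.map_dirac, Measure.map_dirac, neg_neg, add_comm]

theorem integral_ofReal_smul_add_ofReal_smul {α E : Type*} [MeasurableSpace α]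
    [NormedAddCommGroup E] [NormedSpace ℝ E] {μ ν : Measure α} {f : α → E}
    (hμ : Integrable f μ) (hν : Integrable f ν) {a b : ℝ} (ha : 0 ≤ a) (hb : 0 ≤ b) :
    ∫ x, f x ∂(ENNReal.ofReal a • μ + ENNReal.ofReal b • ν)
      = a • ∫ x, f x ∂μ + b • ∫ x, f x ∂ν := by
  rw [integral_add_measure (hμ.smul_measure ENNReal.ofReal_ne_top)
      (hν.smul_measure ENNReal.ofReal_ne_top), integral_smul_measure, integral_smul_measure,
    ENNReal.toReal_ofReal ha, ENNReal.toReal_ofReal hb]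

section Gaussian

theorem gaussianPDFReal_zero_one (x : ℝ) :
    gaussianPDFReal 0 1 x = (√(2 * π))⁻¹ * rexp (-2⁻¹ * x ^ 2) := by
  simp only [gaussianPDFReal_def, NNReal.coe_one, mul_one, sub_zero, div_eq_inv_mul, mul_neg,
    neg_mul]

theorem hasDerivAt_gaussianPDFReal_zero_one (x : ℝ) :
    HasDerivAt (gaussianPDFReal 0 1) (-x * gaussianPDFReal 0 1 x) x := by
  have h := (((hasDerivAt_pow 2 x).const_mul (-2⁻¹ : ℝ)).exp).const_mul (√(2 * π))⁻¹
  rw [show gaussianPDFReal 0 1 = _ from funext gaussianPDFReal_zero_one]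
  exact h.congr_deriv (by push_cast; ring)

theorem integrable_pow_mul_gaussianPDFReal_zero_one (n : ℕ) :
    Integrable fun x : ℝ ↦ x ^ n * gaussianPDFReal 0 1 x := by
  have h := (integrable_rpow_mul_exp_neg_mul_sq (b := 2⁻¹) (by norm_num)
    (s := n) (by linarith [n.cast_nonneg (α := ℝ)])).const_mul (√(2 * π))⁻¹
  simp only [rpow_natCast] at h
  convert h using 2 with x
  rw [gaussianPDFReal_zero_one]
  ring

theorem integral_pow_add_two_gaussianReal (n : ℕ) :
    ∫ x, x ^ (n + 2) ∂gaussianReal 0 1 = (n + 1) * ∫ x, x ^ n ∂gaussianReal 0 1 := by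
  simp only [integral_gaussianReal_eq_integral_smul one_ne_zero, smul_eq_mul]
  have hparts := integral_mul_deriv_eq_deriv_mul_of_integrable
    (u := fun x : ℝ ↦ x ^ (n + 1)) (u' := fun x ↦ (n + 1 : ℝ) * x ^ n)
    (v := gaussianPDFReal 0 1) (v' := fun x ↦ -x * gaussianPDFReal 0 1 x)
    (fun x _ ↦ by simpa using hasDerivAt_pow (n + 1) x)
    (fun x _ ↦ hasDerivAt_gaussianPDFReal_zero_one x)
    ?_ ?_ (integrable_pow_mul_gaussianPDFReal_zero_one (n + 1))
  · have hlhs : ∀ x : ℝ, x ^ (n + 1) * (-x * gaussianPDFReal 0 1 x)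
        = -(gaussianPDFReal 0 1 x * x ^ (n + 2)) := fun x ↦ by ring
    have hrhs : ∀ x : ℝ, (n + 1 : ℝ) * x ^ n * gaussianPDFReal 0 1 x
        = (n + 1) * (gaussianPDFReal 0 1 x * x ^ n) := fun x ↦ by ring
    simpa only [hlhs, hrhs, integral_neg, integral_const_mul, neg_inj] using hparts
  · convert (integrable_pow_mul_gaussianPDFReal_zero_one (n + 2)).neg using 1
    ext x
    simp only [Pi.mul_apply, Pi.neg_apply]
    ring
  · convert (integrable_pow_mul_gaussianPDFReal_zero_one n).const_mul (n + 1 : ℝ) using 1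
    ext x
    simp only [Pi.mul_apply]
    ring

theorem integral_pow_gaussianReal_of_even {r : ℕ} (hr : Even r) :
    ∫ x, x ^ r ∂gaussianReal 0 1 = ((r - 1)‼ : ℝ) := by
  obtain ⟨k, rfl⟩ := hr
  induction k with
  | zero => simp
  | succ k ih =>
    rw [show k + 1 + (k + 1) = k + k + 2 by ring, integral_pow_add_two_gaussianReal, ih,
      show k + k + 2 - 1 = k + k + 1 by omega, Nat.doubleFactorial_add_one]
    push_cast
    ring

end Gaussian

theorem mixture_moments_general (s : ℕ) (hse : Even s)
    (δ lam : ℝ) (hδ0 : 0 < δ) (hδ1 : δ < 1)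
    (η₀ : Measure ℝ)
    (hint : ∀ r : ℕ, Integrable (fun x => x ^ r) η₀)
    (hsymm : η₀.map (fun x => -x) = η₀)
    (hmoments : ∀ r ≤ s, (∫ x, x ^ r ∂η₀) =
      if Odd r then 0
      else ((Nat.doubleFactorial (r - 1) : ℝ) - δ * lam ^ r) / (1 - δ)) :
    (∀ r ≤ s + 1,
      (∫ x, x ^ r ∂(ENNReal.ofReal (1 - δ) • η₀ +
          ENNReal.ofReal δ • ((2 : ℝ≥0∞)⁻¹ • Measure.dirac lam +
            (2 : ℝ≥0∞)⁻¹ • Measure.dirac (-lam))))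
        = ∫ x, x ^ r ∂(gaussianReal 0 1)) ∧
    (∀ r : ℕ, Even r → s < r →
      δ * lam ^ r ≤
        ∫ x, x ^ r ∂(ENNReal.ofReal (1 - δ) • η₀ +
          ENNReal.ofReal δ • ((2 : ℝ≥0∞)⁻¹ • Measure.dirac lam +
            (2 : ℝ≥0∞)⁻¹ • Measure.dirac (-lam)))) := by
  set η := ENNReal.ofReal (1 - δ) • η₀ + ENNReal.ofReal δ •
    ((2 : ℝ≥0∞)⁻¹ • Measure.dirac lam + (2 : ℝ≥0∞)⁻¹ • Measure.dirac (-lam))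
  have hη_even : ∀ r, Even r → ∫ x, x ^ r ∂η = (1 - δ) * ∫ x, x ^ r ∂η₀ + δ * lam ^ r := by
    intro r hr
    rw [integral_ofReal_smul_add_ofReal_smul (hint r) (integrable_half_dirac_add_half_dirac _ _ _)
      (by linarith) hδ0.le, integral_half_dirac_add_half_dirac, hr.neg_pow, smul_eq_mul,
      smul_eq_mul]
    ring
  refine ⟨fun r hr ↦ ?_, fun r hr hsr ↦ ?_⟩
  · rcases r.even_or_odd with hre | hro
    · have hrs : r ≤ s := by
        rcases hr.lt_or_eq with h | rfl
        · omega
        · exact absurd hre (Nat.not_even_iff_odd.mpr hse.add_one)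
      rw [hη_even r hre, hmoments r hrs, if_neg (Nat.not_odd_iff_even.mpr hre),
        integral_pow_gaussianReal_of_even hre]
      field_simp [(by linarith : 1 - δ ≠ 0)]
      ring
    · have hodd : ∀ μ : Measure ℝ, μ.map Neg.neg = μ → ∫ x, x ^ r ∂μ = 0 :=
        fun μ hμ ↦ integral_eq_zero_of_map_neg_eq_self hμ hro.neg_pow
      have hη_symm : η.map Neg.neg = η :=
        map_neg_smul_add_smul_eq_self hsymm (map_neg_half_dirac_add_half_dirac_neg lam) _ _
      have hγ_symm : (gaussianReal 0 1).map Neg.neg = gaussianReal 0 1 := by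
        simpa using gaussianReal_map_neg (μ := 0) (v := 1)
      rw [hodd η hη_symm, hodd _ hγ_symm]
  · have hη₀ : 0 ≤ ∫ x, x ^ r ∂η₀ := integral_nonneg hr.pow_nonneg
    rw [hη_even r hr]
    linarith [mul_nonneg (sub_nonneg.mpr hδ1.le) hη₀]

/-- Moments of the mixture `η = (1−δ)η₀ + δη₁` where `η₁` takes values `±λ` with probability
`1/2` each and `η₀` is symmetric with the prescribed moments up to degree `s`: the moments of
`η` match the standard Gaussian moments up to degree `s+1`, and for even `r > s` the `r`-th
moment of `η` is at least `δ λ^r`. -/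
theorem mixture_moments (s : ℕ) (hs2 : 2 ≤ s) (hse : Even s)
    (δ lam : ℝ) (hδ0 : 0 < δ) (hδ1 : δ < 1) (hlam : 2 ≤ lam)
    (η₀ : Measure ℝ) [IsProbabilityMeasure η₀]
    (hint : ∀ r : ℕ, Integrable (fun x => x ^ r) η₀)
    (hsymm : η₀.map (fun x => -x) = η₀)
    (hmoments : ∀ r ≤ s, (∫ x, x ^ r ∂η₀) =
      if Odd r then 0
      else ((Nat.doubleFactorial (r - 1) : ℝ) - δ * lam ^ r) / (1 - δ)) :
    (∀ r ≤ s + 1,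
      (∫ x, x ^ r ∂(ENNReal.ofReal (1 - δ) • η₀ +
          ENNReal.ofReal δ • ((2 : ℝ≥0∞)⁻¹ • Measure.dirac lam +
            (2 : ℝ≥0∞)⁻¹ • Measure.dirac (-lam))))
        = ∫ x, x ^ r ∂(gaussianReal 0 1)) ∧
    (∀ r : ℕ, Even r → s < r →
      δ * lam ^ r ≤
        ∫ x, x ^ r ∂(ENNReal.ofReal (1 - δ) • η₀ +
          ENNReal.ofReal δ • ((2 : ℝ≥0∞)⁻¹ • Measure.dirac lam +
            (2 : ℝ≥0∞)⁻¹ • Measure.dirac (-lam)))) :=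
  mixture_moments_general s hse δ lam hδ0 hδ1 η₀ hint hsymm hmoments
end
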